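/- arXiv:2107.06042 — 4 statements merged into one kernel-verified Lean document; each statement's English description precedes it below -/
import Mathlib

section
/- LFD formulas are invariant under dependence bisimulations: if Z is a dependence bisimulation between dependence models M and M', and (s,s') ∈ Z, then for every LFD formula φ, M,s ⊨ φ if and only if M',s' ⊨ φ. -/
/-- Syntax of the logic of functional dependence LFD over variables `V` and
relational vocabulary `P` with arity map `ar`. -/
inductive LFD (V P : Type) (ar : P → ℕ) : Type
  | atom : (p : P) → (Fin (ar p) → V) → LFD V P ar
  | neg : LFD V P ar → LFD V P ar
  | and : LFD V P ar → LFD V P ar → LFD V P ar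
  | dmod : Finset V → LFD V P ar → LFD V P ar
  | dep : Finset V → V → LFD V P ar

/-- A dependence model: a relational first-order structure together with a team. -/
structure DepModel (V P : Type) (ar : P → ℕ) : Type 1 where
  O : Type
  I : (p : P) → (Fin (ar p) → O) → Prop
  A : Set (V → O)

variable {V P : Type} {ar : P → ℕ}

/-- `agree s t X`: the assignments `s` and `t` agree on all variables in `X`. -/
def agree {O : Type} (s t : V → O) (X : Set V) : Prop := ∀ v ∈ X, s v = t v

/-- Truth of an LFD formula in a dependence model at an assignment. -/
def DepModel.sat (M : DepModel V P ar) : (V → M.O) → LFD V P ar → Prop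
  | s, .atom p x => M.I p fun i => s (x i)
  | s, .neg φ => ¬ M.sat s φ
  | s, .and φ ψ => M.sat s φ ∧ M.sat s ψ
  | s, .dmod X φ => ∀ t ∈ M.A, agree s t (X : Set V) → M.sat t φ
  | s, .dep X y => ∀ t ∈ M.A, agree s t (X : Set V) → s y = t y

/-- Semantic local dependence of `y` on a (possibly infinite) set `X` at `s`. -/
def locDep (M : DepModel V P ar) (s : V → M.O) (X : Set V) (y : V) : Prop :=
  ∀ t ∈ M.A, agree s t X → s y = t y

/-- Dependence bisimulation between dependence models. -/
structure IsDepBisim (M M' : DepModel V P ar)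
    (Z : (V → M.O) → (V → M'.O) → Prop) : Prop where
  nonempty : ∃ s s', Z s s'
  mem : ∀ {s s'}, Z s s' → s ∈ M.A ∧ s' ∈ M'.A
  ah : ∀ {s s'}, Z s s' → ∀ (p : P) (x : Fin (ar p) → V),
      (M.I p fun i => s (x i)) ↔ (M'.I p fun i => s' (x i))
  forth_closed : ∀ {s s'}, Z s s' → ∀ t ∈ M.A,
      ∀ y, locDep M' s' {v | s v = t v} y → s y = t y
  forth : ∀ {s s'}, Z s s' → ∀ t ∈ M.A,
      ∃ t' ∈ M'.A, Z t t' ∧ ∀ v, s v = t v → s' v = t' v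
  back_closed : ∀ {s s'}, Z s s' → ∀ t' ∈ M'.A,
      ∀ y, locDep M s {v | s' v = t' v} y → s' y = t' y
  back : ∀ {s s'}, Z s s' → ∀ t' ∈ M'.A,
      ∃ t ∈ M.A, Z t t' ∧ ∀ v, s' v = t' v → s v = t v

/-- LFD formulas are invariant under dependence bisimulations. -/
theorem lfd_invariant_under_dep_bisim (M M' : DepModel V P ar)
    (Z : (V → M.O) → (V → M'.O) → Prop) (hZ : IsDepBisim M M' Z)
    {s : V → M.O} {s' : V → M'.O} (h : Z s s') :
    ∀ φ : LFD V P ar, M.sat s φ ↔ M'.sat s' φ := by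
  intro φ
  induction φ generalizing s s' with
  | atom p x => exact hZ.ah h p x
  | neg φ ih => exact not_congr (ih h)
  | and φ ψ ih1 ih2 => exact and_congr (ih1 h) (ih2 h)
  | dmod X φ ih =>
    constructor
    · intro hs t' ht' hag
      obtain ⟨t, ht, hZt, himp⟩ := hZ.back h t' ht'
      exact (ih hZt).mp (hs t ht fun v hv => himp v (hag v hv))
    · intro hs t ht hag
      obtain ⟨t', ht', hZt, himp⟩ := hZ.forth h t ht
      exact (ih hZt).mpr (hs t' ht' fun v hv => himp v (hag v hv))
  | dep X y =>
    constructor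
    · intro hs t' ht' hag
      refine hZ.back_closed h t' ht' y (fun t ht hag2 => hs t ht ?_)
      exact fun v hv => hag2 v (hag v hv)
    · intro hs t ht hag
      refine hZ.forth_closed h t ht y (fun t' ht' hag2 => hs t' ht' ?_)
      exact fun v hv => hag2 v (hag v hv)
end

section
/- Formulas of local inclusion-exclusion logic L[∈,∉] are invariant under inclusion bisimulations: if Z is an inclusion bisimulation between dependence models M, M' with (s,s') ∈ Z, then s ⊨ x̄ ∈ ȳ iff s' ⊨ x̄ ∈ ȳ for all tuples of variables x̄, ȳ of equal length. -/
variable {V P : Type} {ar : P → ℕ}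

/-- The local inclusion atom `x̄ ∈ ȳ`: some team member `t` has `s(x̄) = t(ȳ)`. -/
def inclAtom (M : DepModel V P ar) (s : V → M.O) {n : ℕ} (x y : Fin n → V) : Prop :=
  ∃ t ∈ M.A, ∀ i, s (x i) = t (y i)

/-- Inclusion bisimulation between dependence models. -/
structure IsInclBisim (M M' : DepModel V P ar)
    (Z : (V → M.O) → (V → M'.O) → Prop) : Prop where
  nonempty : ∃ s s', Z s s'
  mem : ∀ {s s'}, Z s s' → s ∈ M.A ∧ s' ∈ M'.A
  ah : ∀ {s s'}, Z s s' → ∀ (p : P) (x : Fin (ar p) → V),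
      (M.I p fun i => s (x i)) ↔ (M'.I p fun i => s' (x i))
  forth : ∀ {s s'}, Z s s' → ∀ t ∈ M.A, ∃ t' ∈ M'.A, Z t t' ∧
      (∀ v, s v = t v → s' v = t' v) ∧
      (∀ x y, x ≠ y → s x = t y → s' x = t' y)
  back : ∀ {s s'}, Z s s' → ∀ t' ∈ M'.A, ∃ t ∈ M.A, Z t t' ∧
      (∀ v, s' v = t' v → s v = t v) ∧
      (∀ x y, x ≠ y → s' x = t' y → s x = t y)

/-- local inclusion atoms (and hence `L[∈,∉]`-formulas) are invariant
under inclusion bisimulations. -/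
theorem incl_atoms_invariant_under_incl_bisim (M M' : DepModel V P ar)
    (Z : (V → M.O) → (V → M'.O) → Prop) (hZ : IsInclBisim M M' Z)
    {s : V → M.O} {s' : V → M'.O} (h : Z s s') :
    ∀ (n : ℕ) (x y : Fin n → V), inclAtom M s x y ↔ inclAtom M' s' x y := by
  intro n x y
  constructor
  · rintro ⟨t, htA, hst⟩
    obtain ⟨t', ht'A, _, h1, h2⟩ := hZ.forth h t htA
    refine ⟨t', ht'A, fun i => ?_⟩
    by_cases hxy : x i = y i
    · rw [hxy]; exact h1 (y i) (hxy ▸ hst i)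
    · exact h2 (x i) (y i) hxy (hst i)
  · rintro ⟨t', ht'A, hst⟩
    obtain ⟨t, htA, _, h1, h2⟩ := hZ.back h t' ht'A
    refine ⟨t, htA, fun i => ?_⟩
    by_cases hxy : x i = y i
    · rw [hxy]; exact h1 (y i) (hxy ▸ hst i)
    · exact h2 (x i) (y i) hxy (hst i)
end

section
/- Restricted truth lemma for the cut-off model: for every path assignment v_π in the cut-off model with lh(π) ≤ 2, D_X y ∈ last(π) if and only if M_cut, v_π ⊨ D_X y. -/
variable {V P : Type} {ar : P → ℕ}

/-- Free variables of an LFD formula. -/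
def LFD.free [DecidableEq V] : LFD V P ar → Finset V
  | .atom _ x => Finset.univ.image x
  | .neg φ => φ.free
  | .and φ ψ => φ.free ∪ ψ.free
  | .dmod X _ => X
  | .dep X _ => X

/-- The dependence-closure `D^Γ_X` of `X` w.r.t. the set of formulas `Γ`
(relative to the relevant variables `Vrel`). -/
def DCl (Vrel : Finset V) (Γ : Set (LFD V P ar)) (X : Finset V) : Set V :=
  {y | y ∈ Vrel ∧ LFD.dep X y ∈ Γ}

/-- The relation `Γ ~_X Δ` on Ψ-types: agreement on all formulas of `Ψ` whose free
variables lie in the dependence-closure of `X` w.r.t. `Γ`. -/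
def simX [DecidableEq V] (Ψ : Set (LFD V P ar)) (Vrel : Finset V)
    (Γ Δ : Set (LFD V P ar)) (X : Finset V) : Prop :=
  ∀ φ ∈ Ψ, (φ.free : Set V) ⊆ DCl Vrel Γ X → (φ ∈ Γ ↔ φ ∈ Δ)

/-- `Γ` is a Ψ-type (conditions (a)–(e)). -/
structure IsPsiType (Ψ : Set (LFD V P ar)) (Vrel : Finset V)
    (Γ : Set (LFD V P ar)) : Prop where
  subset : Γ ⊆ Ψ
  neg_iff : ∀ φ, φ ∈ Ψ → LFD.neg φ ∈ Ψ → (LFD.neg φ ∈ Γ ↔ φ ∉ Γ)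
  and_iff : ∀ φ χ, LFD.and φ χ ∈ Ψ → (LFD.and φ χ ∈ Γ ↔ φ ∈ Γ ∧ χ ∈ Γ)
  dmod_sub : ∀ (X : Finset V) (φ : LFD V P ar), LFD.dmod X φ ∈ Γ → φ ∈ Γ
  proj : ∀ X : Finset V, (X : Set V) ⊆ (Vrel : Set V) → ∀ x ∈ X, LFD.dep X x ∈ Γ
  dep_trans : ∀ (X Y : Finset V) (z : V), (X : Set V) ⊆ (Vrel : Set V) →
      (Y : Set V) ⊆ (Vrel : Set V) → z ∈ Vrel →
      (∀ y ∈ Y, LFD.dep X y ∈ Γ) → LFD.dep Y z ∈ Γ → LFD.dep X z ∈ Γ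

/-- `Ψ` is a closure set with relevant variables `Vrel`. -/
structure IsClosure [DecidableEq V] (Ψ : Set (LFD V P ar)) (Vrel : Finset V) : Prop where
  free_sub : ∀ φ ∈ Ψ, (LFD.free φ : Set V) ⊆ (Vrel : Set V)
  dep_mem : ∀ (X : Finset V) (y : V), (X : Set V) ⊆ (Vrel : Set V) → y ∈ Vrel →
      LFD.dep X y ∈ Ψ
  neg_sub : ∀ φ : LFD V P ar, LFD.neg φ ∈ Ψ → φ ∈ Ψ
  and_sub : ∀ φ χ : LFD V P ar, LFD.and φ χ ∈ Ψ → φ ∈ Ψ ∧ χ ∈ Ψ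
  dmod_sub : ∀ (X : Finset V) (φ : LFD V P ar), LFD.dmod X φ ∈ Ψ → φ ∈ Ψ
  neg_mem : ∀ φ ∈ Ψ, (∃ χ, φ = LFD.neg χ) ∨ LFD.neg φ ∈ Ψ

/-- A type model for `Ψ`: a family of Ψ-types with the existential witness
condition (for the dual `𝔼_X` of `𝔻_X`) and `Γ ~_∅ Δ` for all members. -/
structure IsTypeModel [DecidableEq V] (Ψ : Set (LFD V P ar)) (Vrel : Finset V)
    (𝓜 : Set (Set (LFD V P ar))) : Prop where
  types : ∀ Γ ∈ 𝓜, IsPsiType Ψ Vrel Γ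
  witness : ∀ Γ ∈ 𝓜, ∀ (X : Finset V) (φ : LFD V P ar),
      LFD.dmod X φ ∈ Ψ → LFD.dmod X φ ∉ Γ →
      ∃ Δ ∈ 𝓜, simX Ψ Vrel Γ Δ X ∧ φ ∉ Δ
  empty_sim : ∀ Γ ∈ 𝓜, ∀ Δ ∈ 𝓜, simX Ψ Vrel Γ Δ ∅

/-- The Ψ-type of an assignment in a dependence model. -/
def typePsi (M : DepModel V P ar) (Ψ : Set (LFD V P ar)) (s : V → M.O) :
    Set (LFD V P ar) := {φ ∈ Ψ | M.sat s φ}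

/-- Raw paths over a type model: the list of steps `(X_i, Σ_i)`, most recent first
(so that the "initial segment" relation becomes the list-suffix relation);
the empty list is the root path `⟨S₀⟩`.  `lh π = π.length + 1`. -/
abbrev GPath (V P : Type) (ar : P → ℕ) := List (Finset V × Set (LFD V P ar))

/-- `last(π)`, the last type of a path. -/
def lastType (S₀ : Set (LFD V P ar)) : GPath V P ar → Set (LFD V P ar)
  | [] => S₀
  | (_, Γ) :: _ => Γ

/-- Good paths: `⟨S₀, X₁, Σ₁, ..., X_n, Σ_n⟩` with all `Σ_i ∈ 𝓜`, `X_i ⊆ V` and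
`Σ_{i-1} ~_{X_i} Σ_i`. -/
def GoodPath [DecidableEq V] (Ψ : Set (LFD V P ar)) (Vrel : Finset V)
    (𝓜 : Set (Set (LFD V P ar))) (S₀ : Set (LFD V P ar)) : GPath V P ar → Prop
  | [] => S₀ ∈ 𝓜
  | (X, Γ) :: rest => GoodPath Ψ Vrel 𝓜 S₀ rest ∧ Γ ∈ 𝓜 ∧
      (X : Set V) ⊆ (Vrel : Set V) ∧ simX Ψ Vrel (lastType S₀ rest) Γ X

open Classical in
/-- The path assignment `v_π`: values are inherited from the predecessor path when
the variable is in the dependence-closure of the step, and fresh objects `(π,x)`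
otherwise. -/
noncomputable def pathAsgn (Vrel : Finset V) (S₀ : Set (LFD V P ar)) :
    GPath V P ar → V → GPath V P ar × V
  | [], x => ([], x)
  | (X, Γ) :: rest, x =>
      if x ∈ DCl Vrel (lastType S₀ rest) X then pathAsgn Vrel S₀ rest x
      else ((X, Γ) :: rest, x)

/-- The dependence model obtained by unravelling a type model `𝓜` from the
initial type `S₀`: team of all path assignments of good paths, and the coherence
interpretation (paths linearly ordered by initial segment and the atom belongs to
the last type of the longest path). -/
noncomputable def unravel [DecidableEq V] (Ψ : Set (LFD V P ar)) (Vrel : Finset V)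
    (𝓜 : Set (Set (LFD V P ar))) (S₀ : Set (LFD V P ar)) : DepModel V P ar where
  O := GPath V P ar × V
  I p o := (∀ i j, (o i).1 <:+ (o j).1 ∨ (o j).1 <:+ (o i).1) ∧
      ∃ i, (∀ j, (o j).1 <:+ (o i).1) ∧
        LFD.atom p (fun j => (o j).2) ∈ lastType S₀ (o i).1
  A := {s | ∃ π, GoodPath Ψ Vrel 𝓜 S₀ π ∧ s = pathAsgn Vrel S₀ π}

/-- The cut-off model: the unravelled model restricted to good paths of
length `≤ 3`. -/
noncomputable def cutModel [DecidableEq V] (Ψ : Set (LFD V P ar)) (Vrel : Finset V)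
    (𝓜 : Set (Set (LFD V P ar))) (S₀ : Set (LFD V P ar)) : DepModel V P ar where
  O := GPath V P ar × V
  I := (unravel Ψ Vrel 𝓜 S₀).I
  A := {s | ∃ π, GoodPath Ψ Vrel 𝓜 S₀ π ∧ π.length + 1 ≤ 3 ∧ s = pathAsgn Vrel S₀ π}


section AuxTruth

variable [DecidableEq V] {Ψ : Set (LFD V P ar)} {Vrel : Finset V}
  {𝓜 : Set (Set (LFD V P ar))} {S₀ : Set (LFD V P ar)}

lemma lastType_mem_of_good : ∀ {π : GPath V P ar}, GoodPath Ψ Vrel 𝓜 S₀ π →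
    lastType S₀ π ∈ 𝓜
  | [], h => h
  | (_, _) :: _, h => h.2.1

lemma pathAsgn_fst_suffix (Vrel : Finset V) (S₀ : Set (LFD V P ar)) :
    ∀ (π : GPath V P ar) (x : V), (pathAsgn Vrel S₀ π x).1 <:+ π
  | [], _ => List.nil_suffix
  | (X, Γ) :: rest, x => by
      simp only [pathAsgn]
      split
      · exact (pathAsgn_fst_suffix Vrel S₀ rest x).trans (List.suffix_cons _ _)
      · exact List.suffix_refl _

lemma pathAsgn_eq_of_suffix (Vrel : Finset V) (S₀ : Set (LFD V P ar)) :
    ∀ {π τ : GPath V P ar}, τ <:+ π → ∀ {x : V},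
      (pathAsgn Vrel S₀ π x).1 <:+ τ → pathAsgn Vrel S₀ τ x = pathAsgn Vrel S₀ π x := by
  intro π
  induction π with
  | nil => intro τ h x _; rw [List.suffix_nil.mp h]
  | cons a rest ih =>
    intro τ hτ x hfst
    rcases List.suffix_cons_iff.mp hτ with h | h
    · rw [h]
    · obtain ⟨X, Γ⟩ := a
      have hprop : x ∈ DCl Vrel (lastType S₀ rest) X := by
        by_contra hx
        have h1 : (pathAsgn Vrel S₀ ((X, Γ) :: rest) x).1 = (X, Γ) :: rest := by
          simp [pathAsgn, hx]
        rw [h1] at hfst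
        have h2 := hfst.length_le
        have h3 := h.length_le
        simp only [List.length_cons] at h2
        omega
      have heq : pathAsgn Vrel S₀ ((X, Γ) :: rest) x = pathAsgn Vrel S₀ rest x := by
        simp [pathAsgn, hprop]
      rw [heq] at hfst ⊢
      exact ih h hfst

lemma good_suffix : ∀ {π σ : GPath V P ar}, σ <:+ π →
    GoodPath Ψ Vrel 𝓜 S₀ π → GoodPath Ψ Vrel 𝓜 S₀ σ := by
  intro π
  induction π with
  | nil => intro σ h hg; rw [List.suffix_nil.mp h]; exact hg
  | cons a rest ih =>
    intro σ h hg
    rcases List.suffix_cons_iff.mp h with h | h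
    · rw [h]; exact hg
    · exact ih h hg.1

lemma dep_key (hcl : IsClosure Ψ Vrel) (hM : IsTypeModel Ψ Vrel 𝓜) :
    ∀ (π : GPath V P ar), GoodPath Ψ Vrel 𝓜 S₀ π → ∀ σ, σ <:+ π →
      ∀ (X : Finset V) (y : V), (X : Set V) ⊆ (Vrel : Set V) → y ∈ Vrel →
      (∀ x ∈ X, pathAsgn Vrel S₀ π x = pathAsgn Vrel S₀ σ x) →
      ((LFD.dep X y ∈ lastType S₀ π ↔ LFD.dep X y ∈ lastType S₀ σ) ∧
       (LFD.dep X y ∈ lastType S₀ π →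
         pathAsgn Vrel S₀ π y = pathAsgn Vrel S₀ σ y)) := by
  intro π
  induction π with
  | nil =>
    intro _ σ hσ X y _ _ _
    rw [List.suffix_nil.mp hσ]
    exact ⟨Iff.rfl, fun _ => rfl⟩
  | cons a rest ih =>
    obtain ⟨Y, Γ⟩ := a
    intro hg σ hσ X y hX hy hagree
    rcases List.suffix_cons_iff.mp hσ with h | h
    · subst h; exact ⟨Iff.rfl, fun _ => rfl⟩
    · obtain ⟨hgrest, hΓ, hY, hsim⟩ := hg
      have hprop : ∀ x ∈ X, x ∈ DCl Vrel (lastType S₀ rest) Y := by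
        intro x hx
        by_contra hxd
        have h1 : pathAsgn Vrel S₀ ((Y, Γ) :: rest) x = ((Y, Γ) :: rest, x) := by
          simp [pathAsgn, hxd]
        have h2 := hagree x hx
        rw [h1] at h2
        have h3 : ((pathAsgn Vrel S₀ σ x).1 : GPath V P ar) <:+ σ :=
          pathAsgn_fst_suffix Vrel S₀ σ x
        rw [← h2] at h3
        have h4 := h3.length_le
        have h5 := h.length_le
        simp only [List.length_cons] at h4
        omega
      have hstep : ∀ x ∈ X,
          pathAsgn Vrel S₀ ((Y, Γ) :: rest) x = pathAsgn Vrel S₀ rest x := by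
        intro x hx; simp [pathAsgn, hprop x hx]
      have hagree' : ∀ x ∈ X, pathAsgn Vrel S₀ rest x = pathAsgn Vrel S₀ σ x := by
        intro x hx; rw [← hstep x hx]; exact hagree x hx
      obtain ⟨ihiff, ihprop⟩ := ih hgrest σ h X y hX hy hagree'
      have hΨ : LFD.dep X y ∈ Ψ := hcl.dep_mem X y hX hy
      have hfree : (((LFD.dep X y : LFD V P ar)).free : Set V) ⊆ DCl Vrel (lastType S₀ rest) Y := by
        intro x hx
        exact hprop x (by simpa [LFD.free] using hx)
      have htransfer : LFD.dep X y ∈ lastType S₀ rest ↔ LFD.dep X y ∈ Γ :=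
        hsim _ hΨ hfree
      have hlast : lastType S₀ ((Y, Γ) :: rest) = Γ := rfl
      refine ⟨by rw [hlast, ← htransfer]; exact ihiff, ?_⟩
      intro hdep
      rw [hlast] at hdep
      have hdeprest : LFD.dep X y ∈ lastType S₀ rest := htransfer.mpr hdep
      have htype := hM.types _ (lastType_mem_of_good hgrest)
      have hyprop : y ∈ DCl Vrel (lastType S₀ rest) Y :=
        ⟨hy, htype.dep_trans Y X y hY hX hy (fun x hx => (hprop x hx).2) hdeprest⟩
      have hystep : pathAsgn Vrel S₀ ((Y, Γ) :: rest) y = pathAsgn Vrel S₀ rest y := by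
        simp [pathAsgn, hyprop]
      rw [hystep]
      exact ihprop hdeprest

end AuxTruth

/-- restricted truth lemma for the cut-off model — for every path
assignment `v_π` with `lh(π) ≤ 2`, `D_X y ∈ last(π)` iff `M_cut, v_π ⊨ D_X y`. -/
theorem cutModel_restricted_truth_lemma [DecidableEq V] (Ψ : Set (LFD V P ar))
    (Vrel : Finset V) (𝓜 : Set (Set (LFD V P ar))) (S₀ : Set (LFD V P ar))
    (hcl : IsClosure Ψ Vrel) (hM : IsTypeModel Ψ Vrel 𝓜) (hS₀ : S₀ ∈ 𝓜) :
    ∀ π, GoodPath Ψ Vrel 𝓜 S₀ π → π.length + 1 ≤ 2 →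
      ∀ (X : Finset V) (y : V), (X : Set V) ⊆ (Vrel : Set V) → y ∈ Vrel →
        (LFD.dep X y ∈ lastType S₀ π ↔
          (cutModel Ψ Vrel 𝓜 S₀).sat (pathAsgn Vrel S₀ π) (LFD.dep X y)) := by
  intro π hπ hlen X y hX hy
  constructor
  · intro hdep
    simp only [cutModel, DepModel.sat]
    rintro t ⟨ρ, hρ, hρlen, rfl⟩ hag
    -- find a common suffix τ through which all of X's values originate
    obtain ⟨τ, hτπ, hτρ, hπτ, hρτ⟩ :
        ∃ τ : GPath V P ar, τ <:+ π ∧ τ <:+ ρ ∧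
          (∀ x ∈ X, pathAsgn Vrel S₀ π x = pathAsgn Vrel S₀ τ x) ∧
          (∀ x ∈ X, pathAsgn Vrel S₀ ρ x = pathAsgn Vrel S₀ τ x) := by
      rcases X.eq_empty_or_nonempty with hXe | hXe
      · subst hXe
        exact ⟨[], List.nil_suffix, List.nil_suffix, by simp, by simp⟩
      · obtain ⟨x₀, hx₀, hmax⟩ :=
          X.exists_max_image (fun x => (pathAsgn Vrel S₀ π x).1.length) hXe
        set τ := (pathAsgn Vrel S₀ π x₀).1 with hτdef
        have hagπρ : ∀ x ∈ X, pathAsgn Vrel S₀ π x = pathAsgn Vrel S₀ ρ x := by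
          intro x hx; exact hag x (Finset.mem_coe.mpr hx)
        have hτπ : τ <:+ π := pathAsgn_fst_suffix Vrel S₀ π x₀
        have hτρ : τ <:+ ρ := by
          have := pathAsgn_fst_suffix Vrel S₀ ρ x₀
          rwa [← hagπρ x₀ hx₀] at this
        have hsub : ∀ x ∈ X, (pathAsgn Vrel S₀ π x).1 <:+ τ := by
          intro x hx
          rcases List.suffix_or_suffix_of_suffix
              (pathAsgn_fst_suffix Vrel S₀ π x) hτπ with h | h
          · exact h
          · have hle := hmax x hx
            have := h.eq_of_length (le_antisymm h.length_le hle)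
            rw [← this]
        have hπτ : ∀ x ∈ X, pathAsgn Vrel S₀ π x = pathAsgn Vrel S₀ τ x := by
          intro x hx
          exact (pathAsgn_eq_of_suffix Vrel S₀ hτπ (hsub x hx)).symm
        refine ⟨τ, hτπ, hτρ, hπτ, ?_⟩
        intro x hx
        rw [← hagπρ x hx]
        exact hπτ x hx
    obtain ⟨iff1, prop1⟩ := dep_key hcl hM π hπ τ hτπ X y hX hy hπτ
    obtain ⟨iff2, prop2⟩ := dep_key hcl hM ρ hρ τ hτρ X y hX hy hρτ
    have hdepτ := iff1.mp hdep
    rw [prop1 hdep, prop2 (iff2.mpr hdepτ)]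
  · intro hsat
    by_contra hdep
    have hΓ : lastType S₀ π ∈ 𝓜 := lastType_mem_of_good hπ
    have hgood' : GoodPath Ψ Vrel 𝓜 S₀ ((X, lastType S₀ π) :: π) :=
      ⟨hπ, hΓ, hX, fun φ _ _ => Iff.rfl⟩
    have hmem : pathAsgn Vrel S₀ ((X, lastType S₀ π) :: π) ∈ (cutModel Ψ Vrel 𝓜 S₀).A :=
      ⟨(X, lastType S₀ π) :: π, hgood', by simp; omega, rfl⟩
    have hagree : agree (pathAsgn Vrel S₀ π)
        (pathAsgn Vrel S₀ ((X, lastType S₀ π) :: π)) (X : Set V) := by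
      intro x hx
      have hxX : x ∈ X := Finset.mem_coe.mp hx
      have hxd : x ∈ DCl Vrel (lastType S₀ π) X :=
        ⟨hX hx, (hM.types _ hΓ).proj X hX x hxX⟩
      simp [pathAsgn, hxd]
    have heq := hsat _ hmem hagree
    have hyd : y ∉ DCl Vrel (lastType S₀ π) X := fun h => hdep h.2
    have h1 : pathAsgn Vrel S₀ ((X, lastType S₀ π) :: π) y
        = ((X, lastType S₀ π) :: π, y) := by simp [pathAsgn, hyd]
    rw [h1] at heq
    have hsuf := pathAsgn_fst_suffix Vrel S₀ π y
    rw [congrArg Prod.fst heq] at hsuf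
    have := hsuf.length_le
    simp only [List.length_cons] at this
    omega
end

section
/- Level 2 lemma: for every assignment s in the team of the Herwig extension of the cut-off model, there exists an automorphism f in the group generated by the extended partial isomorphisms such that f∘s = v_π for some path assignment v_π in the cut-off team with lh(π) ≤ 2. -/
variable {V P : Type} {ar : P → ℕ}

/-- Closure of a set of partial isomorphisms under composition and inverse
(the set `⟨p₁,...,p_k⟩`). -/
inductive InClos {γ : Type} (B : Set (PartialEquiv γ γ)) : PartialEquiv γ γ → Prop
  | base {q} : q ∈ B → InClos B q
  | symm {q} : InClos B q → InClos B q.symm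
  | trans {q r} : InClos B q → InClos B r → InClos B (q.trans r)

/-- The chosen partial isomorphisms on the cut-off model: for each good path `π`
of length `3` with `last(π) = Δ`, the unique partial isomorphism `p_π` with
`p_π ∘ v_π = v_{π_Δ}`, where `π_Δ = ⟨Σ₀, ∅, Δ⟩` has length `2`. -/
def herwigBase [DecidableEq V] (Ψ : Set (LFD V P ar)) (Vrel : Finset V)
    (𝓜 : Set (Set (LFD V P ar))) (S₀ : Set (LFD V P ar)) :
    Set (PartialEquiv (GPath V P ar × V) (GPath V P ar × V)) :=
  {q | ∃ π, GoodPath Ψ Vrel 𝓜 S₀ π ∧ π.length + 1 = 3 ∧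
      q.source = Set.range (pathAsgn Vrel S₀ π) ∧
      q.target = Set.range (pathAsgn Vrel S₀ [(∅, lastType S₀ π)]) ∧
      ∀ x, q (pathAsgn Vrel S₀ π x) = pathAsgn Vrel S₀ [(∅, lastType S₀ π)] x}

/-- The subgroup (as a closure) generated by a set of permutations. -/
inductive InGen {Ω : Type} (S : Set (Equiv.Perm Ω)) : Equiv.Perm Ω → Prop
  | base {g} : g ∈ S → InGen S g
  | inv {g} : InGen S g → InGen S g⁻¹
  | mul {g h} : InGen S g → InGen S h → InGen S (g * h)

/-- `Mp` (with embedding `ι` of the cut-off model and set `S` of extended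
automorphisms) is a Herwig extension of the cut-off model of the unravelling of
the type model `𝓜`: `ι` embeds the cut-off model (atoms and team), generated
automorphisms preserve the structure (atoms and team), and Herwig's conditions
(i), (ii) (for live team tuples), (iii) hold. -/
structure IsHerwigExt [DecidableEq V] (Ψ : Set (LFD V P ar)) (Vrel : Finset V)
    (𝓜 : Set (Set (LFD V P ar))) (S₀ : Set (LFD V P ar))
    (Mp : DepModel V P ar) (ι : GPath V P ar × V → Mp.O)
    (S : Set (Equiv.Perm Mp.O)) : Prop where
  inj : Function.Injective ι
  atoms : ∀ (p : P) (o : Fin (ar p) → GPath V P ar × V),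
      (unravel Ψ Vrel 𝓜 S₀).I p o ↔ Mp.I p fun i => ι (o i)
  team_old : ∀ π, GoodPath Ψ Vrel 𝓜 S₀ π → π.length + 1 ≤ 3 →
      (fun x => ι (pathAsgn Vrel S₀ π x)) ∈ Mp.A
  old_team : ∀ s ∈ Mp.A, (∀ x, ∃ a, s x = ι a) →
      ∃ π, GoodPath Ψ Vrel 𝓜 S₀ π ∧ π.length + 1 ≤ 3 ∧
        ∀ x, s x = ι (pathAsgn Vrel S₀ π x)
  gen_team : ∀ f, InGen S f → ∀ s ∈ Mp.A, (fun x => f (s x)) ∈ Mp.A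
  gen_atoms : ∀ f, InGen S f → ∀ (p : P) (o : Fin (ar p) → Mp.O),
      Mp.I p o ↔ Mp.I p fun i => f (o i)
  cond_i : ∀ q ∈ herwigBase Ψ Vrel 𝓜 S₀, ∃ g ∈ S, ∀ a ∈ q.source, g (ι a) = ι (q a)
  cond_i' : ∀ g ∈ S, ∃ q ∈ herwigBase Ψ Vrel 𝓜 S₀, ∀ a ∈ q.source, g (ι a) = ι (q a)
  cond_ii : ∀ s ∈ Mp.A, ∃ f, InGen S f ∧ ∀ x, ∃ a, f (s x) = ι a
  cond_iii : ∀ f, InGen S f → ∀ a b, f (ι a) = ι b → f = 1 ∨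
      ∃ q, InClos (herwigBase Ψ Vrel 𝓜 S₀) q ∧ (∀ c ∈ q.source, f (ι c) = ι (q c)) ∧
        a ∈ q.source ∧ q a = b

open Classical in
/-- The Ψ-type of an assignment `s` in the Herwig extension: `last(π)` for some
(any) cut-off path assignment `v_π` to which `s` is mapped by a generated
automorphism. -/
noncomputable def typeOf [DecidableEq V] (Ψ : Set (LFD V P ar)) (Vrel : Finset V)
    (𝓜 : Set (Set (LFD V P ar))) (S₀ : Set (LFD V P ar)) {Mp : DepModel V P ar}
    (ι : GPath V P ar × V → Mp.O) (S : Set (Equiv.Perm Mp.O)) (s : V → Mp.O) :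
    Set (LFD V P ar) :=
  lastType S₀ (Classical.epsilon fun π => GoodPath Ψ Vrel 𝓜 S₀ π ∧
      π.length + 1 ≤ 3 ∧ ∃ f, InGen S f ∧ ∀ x, f (s x) = ι (pathAsgn Vrel S₀ π x))

lemma pathAsgn_snd (Vrel : Finset V) (S₀ : Set (LFD V P ar)) :
    ∀ (π : GPath V P ar) (x : V), (pathAsgn Vrel S₀ π x).2 = x := by
  intro π x
  induction π with
  | nil => rfl
  | cons hd tl ih =>
      obtain ⟨X, Γ⟩ := hd
      simp only [pathAsgn]
      split
      · exact ih
      · rfl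

lemma pathAsgn_inj (Vrel : Finset V) (S₀ : Set (LFD V P ar)) (π : GPath V P ar) :
    Function.Injective (pathAsgn Vrel S₀ π) := by
  intro x y h
  have := congrArg Prod.snd h
  rwa [pathAsgn_snd, pathAsgn_snd] at this

lemma lastType_mem [DecidableEq V] {Ψ : Set (LFD V P ar)} {Vrel : Finset V}
    {𝓜 : Set (Set (LFD V P ar))} {S₀ : Set (LFD V P ar)} :
    ∀ {π : GPath V P ar}, GoodPath Ψ Vrel 𝓜 S₀ π → lastType S₀ π ∈ 𝓜 := by
  intro π h
  cases π with
  | nil => exact h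
  | cons hd tl => exact h.2.1

/-- The canonical partial isomorphism `p_π` for a path `π`. -/
noncomputable def pPi (Vrel : Finset V) (S₀ : Set (LFD V P ar)) (π : GPath V P ar) :
    PartialEquiv (GPath V P ar × V) (GPath V P ar × V) where
  toFun a := pathAsgn Vrel S₀ [(∅, lastType S₀ π)] a.2
  invFun a := pathAsgn Vrel S₀ π a.2
  source := Set.range (pathAsgn Vrel S₀ π)
  target := Set.range (pathAsgn Vrel S₀ [(∅, lastType S₀ π)])
  map_source' := fun a _ => ⟨a.2, rfl⟩
  map_target' := fun a _ => ⟨a.2, rfl⟩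
  left_inv' := by
    rintro a ⟨x, rfl⟩
    simp only [pathAsgn_snd]
  right_inv' := by
    rintro a ⟨x, rfl⟩
    simp only [pathAsgn_snd]

lemma pPi_mem [DecidableEq V] {Ψ : Set (LFD V P ar)} {Vrel : Finset V}
    {𝓜 : Set (Set (LFD V P ar))} {S₀ : Set (LFD V P ar)} {π : GPath V P ar}
    (hg : GoodPath Ψ Vrel 𝓜 S₀ π) (hl : π.length + 1 = 3) :
    pPi Vrel S₀ π ∈ herwigBase Ψ Vrel 𝓜 S₀ := by
  refine ⟨π, hg, hl, rfl, rfl, fun x => ?_⟩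
  show pathAsgn Vrel S₀ [(∅, lastType S₀ π)] (pathAsgn Vrel S₀ π x).2 = _
  rw [pathAsgn_snd]

/-- level 2 lemma — every assignment in the team of the Herwig
extension is mapped by some generated automorphism to a path assignment `v_π`
of the cut-off team with `lh(π) ≤ 2`. -/
theorem level_two_lemma [DecidableEq V] (Ψ : Set (LFD V P ar)) (Vrel : Finset V)
    (𝓜 : Set (Set (LFD V P ar))) (S₀ : Set (LFD V P ar))
    (hcl : IsClosure Ψ Vrel) (hM : IsTypeModel Ψ Vrel 𝓜) (hS₀ : S₀ ∈ 𝓜)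
    (Mp : DepModel V P ar) (ι : GPath V P ar × V → Mp.O)
    (S : Set (Equiv.Perm Mp.O)) (hH : IsHerwigExt Ψ Vrel 𝓜 S₀ Mp ι S) :
    ∀ s ∈ Mp.A, ∃ f, InGen S f ∧
      ∃ π, GoodPath Ψ Vrel 𝓜 S₀ π ∧ π.length + 1 ≤ 2 ∧
        ∀ x, f (s x) = ι (pathAsgn Vrel S₀ π x) := by
  intro s hs
  obtain ⟨f, hf, hfr⟩ := hH.cond_ii s hs
  have hfsA : (fun x => f (s x)) ∈ Mp.A := hH.gen_team f hf s hs
  obtain ⟨π, hπg, hπl, hπe⟩ := hH.old_team _ hfsA hfr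
  by_cases h2 : π.length + 1 ≤ 2
  · exact ⟨f, hf, π, hπg, h2, hπe⟩
  · have h3 : π.length + 1 = 3 := by omega
    obtain ⟨g, hgS, hg⟩ := hH.cond_i (pPi Vrel S₀ π) (pPi_mem hπg h3)
    refine ⟨g * f, InGen.mul (InGen.base hgS) hf, [(∅, lastType S₀ π)],
      ⟨hS₀, lastType_mem hπg, by simp, hM.empty_sim S₀ hS₀ _ (lastType_mem hπg)⟩,
      by simp, fun x => ?_⟩
    have := hg (pathAsgn Vrel S₀ π x) ⟨x, rfl⟩
    show g (f (s x)) = _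
    rw [hπe x, this]
    show ι (pathAsgn Vrel S₀ [(∅, lastType S₀ π)] (pathAsgn Vrel S₀ π x).2) = _
    rw [pathAsgn_snd]
end
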